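/- arXiv:2005.00412 — 5 statements merged into one kernel-verified Lean document; each statement's English description precedes it below -/
import Mathlib

section
/- Let z_1, z_2, z_3 be the vertices of a (nondegenerate) triangle in ℝ² with side lengths d_ij = ‖z_i − z_j‖, and let d_3 > d_2 ≥ d_1 > 0. If the two Apollonius circles satisfy r_23 − r_13 > ‖b_23 − b_13‖ (one circle strictly contains the other), then necessarily r_23 > r_13 and d_2 > d_1. -/
/-- Lemma 1 (first half): for a nondegenerate triangle and `0 < d₁ ≤ d₂ < d₃`,
if the Apollonius circle along `z₁z₃` lies strictly inside the one along `z₂z₃`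
(i.e. `r₂₃ − r₁₃ > ‖b₂₃ − b₁₃‖`), then `r₂₃ > r₁₃` and `d₂ > d₁`. -/
theorem strict_containment_forces
    (z₁ z₂ z₃ : EuclideanSpace ℝ (Fin 2)) (d₁ d₂ d₃ : ℝ)
    (htri : AffineIndependent ℝ ![z₁, z₂, z₃])
    (hd₁ : 0 < d₁) (h12 : d₁ ≤ d₂) (h23 : d₂ < d₃)
    (hcont : d₂ * d₃ * ‖z₂ - z₃‖ / (d₃ ^ 2 - d₂ ^ 2)
        - d₁ * d₃ * ‖z₁ - z₃‖ / (d₃ ^ 2 - d₁ ^ 2)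
      > ‖((d₃ ^ 2 / (d₃ ^ 2 - d₂ ^ 2)) • z₂ + (d₂ ^ 2 / (d₂ ^ 2 - d₃ ^ 2)) • z₃)
          - ((d₃ ^ 2 / (d₃ ^ 2 - d₁ ^ 2)) • z₁ + (d₁ ^ 2 / (d₁ ^ 2 - d₃ ^ 2)) • z₃)‖) :
    d₁ * d₃ * ‖z₁ - z₃‖ / (d₃ ^ 2 - d₁ ^ 2)
        < d₂ * d₃ * ‖z₂ - z₃‖ / (d₃ ^ 2 - d₂ ^ 2) ∧
      d₁ < d₂ := by
  constructor
  · have := norm_nonneg (((d₃ ^ 2 / (d₃ ^ 2 - d₂ ^ 2)) • z₂ + (d₂ ^ 2 / (d₂ ^ 2 - d₃ ^ 2)) • z₃)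
          - ((d₃ ^ 2 / (d₃ ^ 2 - d₁ ^ 2)) • z₁ + (d₁ ^ 2 / (d₁ ^ 2 - d₃ ^ 2)) • z₃))
    linarith
  · by_contra h
    push_neg at h
    have hd : d₁ = d₂ := le_antisymm h12 h
    subst hd
    have hne : z₂ ≠ z₁ := by
      intro h
      have : ((1 : Fin 3) : Fin 3) = 0 :=
        htri.injective (show ![z₁, z₂, z₃] 1 = ![z₁, z₂, z₃] 0 by simpa using h)
      simp at this
    have hc : 0 < ‖z₂ - z₁‖ := by
      simpa [sub_eq_zero] using hne
    have hD : 0 < d₃ ^ 2 - d₁ ^ 2 := by nlinarith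
    have hb : ((d₃ ^ 2 / (d₃ ^ 2 - d₁ ^ 2)) • z₂ + (d₁ ^ 2 / (d₁ ^ 2 - d₃ ^ 2)) • z₃)
          - ((d₃ ^ 2 / (d₃ ^ 2 - d₁ ^ 2)) • z₁ + (d₁ ^ 2 / (d₁ ^ 2 - d₃ ^ 2)) • z₃)
        = (d₃ ^ 2 / (d₃ ^ 2 - d₁ ^ 2)) • (z₂ - z₁) := by module
    rw [hb, norm_smul, Real.norm_eq_abs, abs_of_pos (div_pos (by nlinarith) hD)] at hcont
    have htriangle : ‖z₂ - z₃‖ ≤ ‖z₂ - z₁‖ + ‖z₁ - z₃‖ := by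
      simpa using norm_add_le (z₂ - z₁) (z₁ - z₃)
    rw [gt_iff_lt, div_sub_div_same, div_mul_eq_mul_div, div_lt_div_iff₀ hD hD] at hcont
    have hd₃ : 0 < d₃ := lt_trans hd₁ h23
    have h2 : d₃ ^ 2 * ‖z₂ - z₁‖ < d₁ * d₃ * ‖z₂ - z₃‖ - d₁ * d₃ * ‖z₁ - z₃‖ :=
      lt_of_mul_lt_mul_right hcont hD.le
    have h3 : d₁ * d₃ * (‖z₂ - z₃‖ - ‖z₁ - z₃‖) ≤ d₁ * d₃ * ‖z₂ - z₁‖ :=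
      mul_le_mul_of_nonneg_left (by linarith) (by positivity)
    nlinarith [mul_lt_mul_of_pos_right (show d₁ * d₃ < d₃ ^ 2 by nlinarith) hc]
end

section
/- (Monotonicity enabling existence, case d_3 = d_2 > d_1.) Let z_1, z_2, z_3 be vertices of a nondegenerate triangle, 0 < d_1 < d_2 = d_3. For k ∈ [1, d_2/d_1) define D(k) = |z_23 · (b_13(k) − (z_2+z_3)/2)|/‖z_23‖ − r_13(k), where z_23 = z_2 − z_3 and b_13(k), r_13(k) are the Apollonius center and radius for ratio k d_1 : d_3 on segment z_1 z_3. If D(1) > 0, then there exists k ∈ (1, d_2/d_1) with D(k) ≤ 0; consequently for this k there exists x with ‖x − z_3‖ d_2 = ‖x − z_2‖ d_3 and ‖x − z_1‖ d_3 = ‖x − z_3‖ k d_1. -/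
/-!
Multiplied by `d₃² - k²d₁²`, the condition `D(k) ≤ 0` reads
`|d₃² ⟪z₂ - z₃, z₁ - z₃⟫ - (d₃² - k²d₁²) ‖z₂ - z₃‖² / 2| ≤ k d₁ d₃ ‖z₁ - z₃‖ ‖z₂ - z₃‖`.
At the endpoint `k = d₂/d₁` this is the strict Cauchy–Schwarz inequality for the two
non-parallel sides `z₂ - z₃`, `z₁ - z₃`, so by continuity it holds for some `k < d₂/d₁`.
Then the Apollonius circle meets the perpendicular bisector of `z₂z₃`, and a common point
satisfies both ratio conditions by the identity
`(c - a) ‖x - b‖² = c ‖x - z₁‖² - a ‖x - z₃‖² + a c / (c - a) ‖z₁ - z₃‖²`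
for the Apollonius centre `b`, with `a = k²d₁²` and `c = d₃²`.
-/

open scoped RealInnerProductSpace
open Set Module EuclideanGeometry

section InnerProductSpace

variable {E : Type*} [NormedAddCommGroup E] [InnerProductSpace ℝ E]

theorem exists_norm_eq_one_inner_eq_zero [FiniteDimensional ℝ E] (hE : 2 ≤ finrank ℝ E)
    (u : E) : ∃ v : E, ‖v‖ = 1 ∧ ⟪u, v⟫ = 0 := by
  have hK : (ℝ ∙ u)ᗮ ≠ ⊥ := by
    intro h
    have h₁ := (ℝ ∙ u).finrank_add_finrank_orthogonal
    have h₂ : finrank ℝ (ℝ ∙ u) ≤ 1 := by simpa using finrank_span_le_card ({u} : Set E)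
    rw [h, finrank_bot] at h₁
    omega
  obtain ⟨w, hwK, hw⟩ := Submodule.exists_mem_ne_zero_of_ne_bot hK
  refine ⟨‖w‖⁻¹ • w, norm_smul_inv_norm hw, ?_⟩
  rw [inner_smul_right, Submodule.mem_orthogonal_singleton_iff_inner_right.1 hwK, mul_zero]

theorem exists_inner_sub_eq_zero_norm_sub_eq [FiniteDimensional ℝ E] (hE : 2 ≤ finrank ℝ E)
    {u : E} (hu : u ≠ 0) {m b : E} {r : ℝ} (h : |⟪u, b - m⟫| / ‖u‖ ≤ r) :
    ∃ x : E, ⟪u, x - m⟫ = 0 ∧ ‖x - b‖ = r := by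
  obtain ⟨v, hv, huv⟩ := exists_norm_eq_one_inner_eq_zero hE u
  have hu' : ‖u‖ ≠ 0 := norm_ne_zero_iff.2 hu
  set p := b - (⟪u, b - m⟫ / ‖u‖ ^ 2) • u
  have hp : ‖p - b‖ = |⟪u, b - m⟫| / ‖u‖ := by
    rw [sub_sub_cancel_left, norm_neg, norm_smul, Real.norm_eq_abs, abs_div, abs_sq]
    field_simp
  have hr : ‖p - b‖ ^ 2 ≤ r ^ 2 := by
    rw [hp]; exact pow_le_pow_left₀ (by positivity) h 2
  have hr₀ : 0 ≤ r := (by positivity : 0 ≤ |⟪u, b - m⟫| / ‖u‖).trans h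
  have hpb : p - b = -(⟪u, b - m⟫ / ‖u‖ ^ 2) • u := by rw [sub_sub_cancel_left, neg_smul]
  refine ⟨p + √(r ^ 2 - ‖p - b‖ ^ 2) • v, ?_, ?_⟩
  · have hpm : p - m = (b - m) - (⟪u, b - m⟫ / ‖u‖ ^ 2) • u := sub_right_comm _ _ _
    rw [add_sub_right_comm, inner_add_right, inner_smul_right, huv, hpm, inner_sub_right,
      inner_smul_right, real_inner_self_eq_norm_sq]
    field_simp
    ring
  · have horth : ⟪p - b, √(r ^ 2 - ‖p - b‖ ^ 2) • v⟫ = 0 := by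
      rw [hpb, inner_smul_left, inner_smul_right, huv]; simp
    rw [← mul_self_inj (norm_nonneg _) hr₀, add_sub_right_comm,
      norm_add_sq_eq_norm_sq_add_norm_sq_real horth, norm_smul, hv, mul_one,
      Real.norm_eq_abs, abs_mul_abs_self, Real.mul_self_sqrt (by linarith)]
    ring

theorem norm_sub_eq_norm_sub_of_inner_sub_midpoint_eq_zero {x z₂ z₃ : E}
    (h : ⟪z₂ - z₃, x - (2 : ℝ)⁻¹ • (z₂ + z₃)⟫ = 0) : ‖x - z₃‖ = ‖x - z₂‖ := by
  have hx : x ∈ AffineSubspace.perpBisector z₃ z₂ := by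
    rw [AffineSubspace.mem_perpBisector_iff_inner_eq_zero', midpoint_eq_smul_add, add_comm]
    simpa using h
  simpa [dist_eq_norm] using AffineSubspace.mem_perpBisector_iff_dist_eq.1 hx

/-- For `a = e ^ 2`, `c = f ^ 2` this is the centre of the Apollonius circle
`‖x - z₁‖ * f = ‖x - z₃‖ * e`; the paper's `b₁₃(k)` is `apolloniusCenter z₁ z₃ (k²d₁²) d₃²`. -/
noncomputable def apolloniusCenter (z₁ z₃ : E) (a c : ℝ) : E :=
  (c / (c - a)) • z₁ + (a / (a - c)) • z₃

variable {z₁ z₃ : E} {a c : ℝ}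

theorem apolloniusCenter_sub_right (h : c ≠ a) :
    apolloniusCenter z₁ z₃ a c - z₃ = (c / (c - a)) • (z₁ - z₃) := by
  have ha : a / (a - c) = 1 - c / (c - a) := by
    field_simp [sub_ne_zero.2 h, sub_ne_zero.2 h.symm]
    ring
  rw [apolloniusCenter, ha, sub_smul, one_smul, smul_sub]
  abel

theorem sub_mul_norm_sub_apolloniusCenter_sq (h : c ≠ a) (x : E) :
    (c - a) * ‖x - apolloniusCenter z₁ z₃ a c‖ ^ 2
      = c * ‖x - z₁‖ ^ 2 - a * ‖x - z₃‖ ^ 2 + a * c / (c - a) * ‖z₁ - z₃‖ ^ 2 := by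
  have hx : x - apolloniusCenter z₁ z₃ a c = (x - z₃) - (c / (c - a)) • (z₁ - z₃) := by
    rw [← apolloniusCenter_sub_right h]; abel
  have hx₁ : x - z₁ = (x - z₃) - (z₁ - z₃) := by abel
  rw [hx, hx₁]
  simp only [← real_inner_self_eq_norm_sq, inner_sub_left, inner_sub_right, inner_smul_left,
    inner_smul_right, real_inner_comm (x - z₃), RCLike.conj_to_real]
  field_simp [sub_ne_zero.2 h]
  ring

theorem mul_norm_sub_eq_of_norm_sub_apolloniusCenter_eq {e f : ℝ} (he : 0 ≤ e) (hef : e < f)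
    {x : E}
    (hx : ‖x - apolloniusCenter z₁ z₃ (e ^ 2) (f ^ 2)‖ = e * f * ‖z₁ - z₃‖ / (f ^ 2 - e ^ 2)) :
    ‖x - z₁‖ * f = ‖x - z₃‖ * e := by
  have hs : 0 < f ^ 2 - e ^ 2 := by nlinarith
  have hid := sub_mul_norm_sub_apolloniusCenter_sq (z₁ := z₁) (z₃ := z₃) (a := e ^ 2)
    (c := f ^ 2) (sub_ne_zero.1 hs.ne') x
  rw [hx] at hid
  have hsq : (‖x - z₁‖ * f) ^ 2 = (‖x - z₃‖ * e) ^ 2 := by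
    field_simp at hid
    have h0 : (f ^ 2 - e ^ 2) * ((‖x - z₁‖ * f) ^ 2 - (‖x - z₃‖ * e) ^ 2) = 0 := by
      linear_combination -hid
    exact sub_eq_zero.1 ((mul_eq_zero.1 h0).resolve_left hs.ne')
  exact (sq_eq_sq₀ (by nlinarith [norm_nonneg (x - z₁)]) (by positivity)).1 hsq

theorem abs_inner_apolloniusCenter_sub_div_norm_le (hac : a < c) {z₂ : E} (hu : z₂ - z₃ ≠ 0)
    {ρ : ℝ} (h : |c * ⟪z₂ - z₃, z₁ - z₃⟫ - (c - a) * ‖z₂ - z₃‖ ^ 2 / 2| ≤ ρ * ‖z₂ - z₃‖) :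
    |⟪z₂ - z₃, apolloniusCenter z₁ z₃ a c - (2 : ℝ)⁻¹ • (z₂ + z₃)⟫| / ‖z₂ - z₃‖ ≤ ρ / (c - a) := by
  have hs : 0 < c - a := sub_pos.2 hac
  have hu' : 0 < ‖z₂ - z₃‖ := norm_pos_iff.2 hu
  have hb : apolloniusCenter z₁ z₃ a c - (2 : ℝ)⁻¹ • (z₂ + z₃)
      = (c / (c - a)) • (z₁ - z₃) - (2 : ℝ)⁻¹ • (z₂ - z₃) := by
    rw [← apolloniusCenter_sub_right hac.ne']
    module
  have hinner : ⟪z₂ - z₃, apolloniusCenter z₁ z₃ a c - (2 : ℝ)⁻¹ • (z₂ + z₃)⟫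
      = (c * ⟪z₂ - z₃, z₁ - z₃⟫ - (c - a) * ‖z₂ - z₃‖ ^ 2 / 2) / (c - a) := by
    rw [hb, inner_sub_right, inner_smul_right, inner_smul_right, real_inner_self_eq_norm_sq]
    field_simp
  rw [hinner, abs_div, abs_of_pos hs, div_div, div_le_div_iff₀ (by positivity) hs]
  nlinarith

end InnerProductSpace

theorem abs_inner_vsub_lt_mul_dist_of_not_collinear {V P : Type*} [NormedAddCommGroup V]
    [InnerProductSpace ℝ V] [MetricSpace P] [NormedAddTorsor V P] {p₁ p₂ p₃ : P}
    (h : ¬Collinear ℝ {p₁, p₂, p₃}) :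
    |⟪p₁ -ᵥ p₂, p₃ -ᵥ p₂⟫| < dist p₁ p₂ * dist p₃ p₂ := by
  have hsin := sin_pos_of_not_collinear h
  have hcos : |Real.cos (∠ p₁ p₂ p₃)| < 1 := by
    rw [abs_lt]; constructor <;> nlinarith [Real.sin_sq_add_cos_sq (∠ p₁ p₂ p₃)]
  have hpos : 0 < dist p₁ p₂ * dist p₃ p₂ :=
    mul_pos (dist_pos.2 (ne₁₂_of_not_collinear h)) (dist_pos.2 (ne₂₃_of_not_collinear h).symm)
  rw [← InnerProductGeometry.cos_angle_mul_norm_mul_norm, ← dist_eq_norm_vsub,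
    ← dist_eq_norm_vsub, abs_mul, abs_of_pos hpos]
  exact mul_lt_of_lt_one_left hpos hcos

theorem exists_mem_Ioo_abs_sub_le_mul {d₁ d₂ I M N : ℝ} (hd₂ : d₂ ≠ 0) (h12 : d₁ < d₂)
    (hI : |I| < N * M) :
    ∃ e ∈ Ioo d₁ d₂, |d₂ ^ 2 * I - (d₂ ^ 2 - e ^ 2) * N ^ 2 / 2| ≤ e * d₂ * M * N := by
  have hcont : Continuous fun e : ℝ ↦
      e * d₂ * M * N - |d₂ ^ 2 * I - (d₂ ^ 2 - e ^ 2) * N ^ 2 / 2| := by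
    fun_prop
  have hpos : 0 < d₂ * d₂ * M * N - |d₂ ^ 2 * I - (d₂ ^ 2 - d₂ ^ 2) * N ^ 2 / 2| := by
    rw [sub_self, zero_mul, zero_div, sub_zero, abs_mul, abs_sq]
    nlinarith [mul_pos (sq_pos_of_ne_zero hd₂) (sub_pos.2 hI)]
  have hev := (hcont.continuousAt.eventually (lt_mem_nhds hpos)).filter_mono
    (nhdsWithin_le_nhds (s := Iio d₂))
  obtain ⟨e, he, hIoo⟩ := (hev.and (Ioo_mem_nhdsLT h12)).exists
  exact ⟨e, hIoo, by linarith⟩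

theorem exists_k_D_nonpos_general
    (z₁ z₂ z₃ : EuclideanSpace ℝ (Fin 2)) (d₁ d₂ d₃ : ℝ)
    (htri : AffineIndependent ℝ ![z₁, z₂, z₃])
    (hd₁ : 0 < d₁) (h12 : d₁ < d₂) (h32 : d₃ = d₂)
    (D : ℝ → ℝ)
    (hD : ∀ k : ℝ,
      D k = |⟪z₂ - z₃, ((d₃ ^ 2 / (d₃ ^ 2 - k ^ 2 * d₁ ^ 2)) • z₁
                + (k ^ 2 * d₁ ^ 2 / (k ^ 2 * d₁ ^ 2 - d₃ ^ 2)) • z₃)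
              - (2 : ℝ)⁻¹ • (z₂ + z₃)⟫| / ‖z₂ - z₃‖
            - k * d₁ * d₃ * ‖z₁ - z₃‖ / (d₃ ^ 2 - k ^ 2 * d₁ ^ 2)) :
    ∃ k : ℝ, 1 < k ∧ k < d₂ / d₁ ∧ D k ≤ 0 ∧
      ∃ x : EuclideanSpace ℝ (Fin 2),
        ‖x - z₃‖ * d₂ = ‖x - z₂‖ * d₃ ∧
        ‖x - z₁‖ * d₃ = ‖x - z₃‖ * (k * d₁) := by
  subst d₃
  have hcol : ¬Collinear ℝ {z₂, z₃, z₁} := by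
    rw [affineIndependent_iff_not_collinear_set, Set.insert_comm, Set.pair_comm] at htri
    exact htri
  have hu : z₂ - z₃ ≠ 0 := sub_ne_zero.2 (ne₁₂_of_not_collinear hcol)
  have hCS : |⟪z₂ - z₃, z₁ - z₃⟫| < ‖z₂ - z₃‖ * ‖z₁ - z₃‖ := by
    simpa [dist_eq_norm] using abs_inner_vsub_lt_mul_dist_of_not_collinear hcol
  obtain ⟨e, ⟨hd₁e, he₂⟩, he⟩ := exists_mem_Ioo_abs_sub_le_mul (hd₁.trans h12).ne' h12 hCS
  have hke : e / d₁ * d₁ = e := div_mul_cancel₀ e hd₁.ne'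
  have hke₂ : (e / d₁) ^ 2 * d₁ ^ 2 = e ^ 2 := by rw [← mul_pow, hke]
  have hdist := abs_inner_apolloniusCenter_sub_div_norm_le
    (pow_lt_pow_left₀ he₂ (hd₁.trans hd₁e).le two_ne_zero) hu he
  obtain ⟨x, hx_bis, hx_circ⟩ := exists_inner_sub_eq_zero_norm_sub_eq (by simp) hu hdist
  refine ⟨e / d₁, (one_lt_div hd₁).2 hd₁e, div_lt_div_of_pos_right he₂ hd₁,
    by rw [hD, hke₂, hke]; exact sub_nonpos.2 hdist, x,
    by rw [norm_sub_eq_norm_sub_of_inner_sub_midpoint_eq_zero hx_bis], ?_⟩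
  rw [hke]
  exact mul_norm_sub_eq_of_norm_sub_apolloniusCenter_eq (hd₁.trans hd₁e).le he₂ hx_circ

/-- Theorem 2 of the paper: case `d₃ = d₂ > d₁`. If `D(1) > 0`, there is
`k ∈ (1, d₂/d₁)` with `D(k) ≤ 0`, and consequently a point `x` on both the
perpendicular bisector of `z₂z₃` and the Apollonius circle for ratio `k d₁ : d₃`. -/
theorem exists_k_D_nonpos
    (z₁ z₂ z₃ : EuclideanSpace ℝ (Fin 2)) (d₁ d₂ d₃ : ℝ)
    (htri : AffineIndependent ℝ ![z₁, z₂, z₃])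
    (hd₁ : 0 < d₁) (h12 : d₁ < d₂) (h32 : d₃ = d₂)
    (D : ℝ → ℝ)
    (hD : ∀ k : ℝ,
      D k = |⟪z₂ - z₃, ((d₃ ^ 2 / (d₃ ^ 2 - k ^ 2 * d₁ ^ 2)) • z₁
                + (k ^ 2 * d₁ ^ 2 / (k ^ 2 * d₁ ^ 2 - d₃ ^ 2)) • z₃)
              - (2 : ℝ)⁻¹ • (z₂ + z₃)⟫| / ‖z₂ - z₃‖
            - k * d₁ * d₃ * ‖z₁ - z₃‖ / (d₃ ^ 2 - k ^ 2 * d₁ ^ 2))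
    (hD1 : 0 < D 1) :
    ∃ k : ℝ, 1 < k ∧ k < d₂ / d₁ ∧ D k ≤ 0 ∧
      ∃ x : EuclideanSpace ℝ (Fin 2),
        ‖x - z₃‖ * d₂ = ‖x - z₂‖ * d₃ ∧
        ‖x - z₁‖ * d₃ = ‖x - z₃‖ * (k * d₁) :=
  exists_k_D_nonpos_general z₁ z₂ z₃ d₁ d₂ d₃ htri hd₁ h12 h32 D hD
end

section
/- (Continuity/IVT for case 112−113.) Let z_1, z_2, z_3 be vertices of a nondegenerate triangle and 0 < d_1 < d_2 < d_3. For k ∈ [1, d_2/d_1) define E(k) = (r_23 − r_13(k)) − ‖b_23 − b_13(k)‖, where b_23, r_23 are the Apollonius data for ratio d_2 : d_3 on segment z_2 z_3 and b_13(k), r_13(k) for ratio k d_1 : d_3 on segment z_1 z_3. If E(1) > 0, then there exists k ∈ (1, d_2/d_1) with E(k) = 0, i.e., the two Apollonius circles are internally tangent, so a point x exists with ‖x − z_2‖ d_3 = ‖x − z_3‖ d_2 and ‖x − z_1‖ d_3 = ‖x − z_3‖ k d_1. -/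
open scoped RealInnerProductSpace

set_option maxHeartbeats 1600000 in
/-- Membership of the Apollonius circle: any point on the circle with center
`(D²/(D²-d²)) • a + (d²/(d²-D²)) • c` and radius `d·D·‖a-c‖/(D²-d²)` satisfies
`‖x - a‖ · D = ‖x - c‖ · d`. -/
lemma apollonius_circle_mem (a c x : EuclideanSpace ℝ (Fin 2)) (d D : ℝ)
    (hd : 0 < d) (hdD : d < D)
    (hx : ‖x - ((D ^ 2 / (D ^ 2 - d ^ 2)) • a + (d ^ 2 / (d ^ 2 - D ^ 2)) • c)‖
        = d * D * ‖a - c‖ / (D ^ 2 - d ^ 2)) :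
    ‖x - a‖ * D = ‖x - c‖ * d := by
  have hD : 0 < D := hd.trans hdD
  have hs : (0:ℝ) < D ^ 2 - d ^ 2 := by nlinarith
  have hsne : (D ^ 2 - d ^ 2) ≠ 0 := ne_of_gt hs
  have hsne' : (d ^ 2 - D ^ 2) ≠ 0 := by intro h; apply hsne; linarith
  set b : EuclideanSpace ℝ (Fin 2) :=
    (D ^ 2 / (D ^ 2 - d ^ 2)) • a + (d ^ 2 / (d ^ 2 - D ^ 2)) • c with hb
  have key : (D ^ 2 - d ^ 2) • (x - b) = (D ^ 2) • (x - a) - (d ^ 2) • (x - c) := by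
    rw [hb]; match_scalars <;> (field_simp; try ring)
  have h2 : ‖(D ^ 2 - d ^ 2) • (x - b)‖ ^ 2 = ‖(D ^ 2) • (x - a) - (d ^ 2) • (x - c)‖ ^ 2 := by
    rw [key]
  have hL : ‖(D ^ 2 - d ^ 2) • (x - b)‖ ^ 2 = (D ^ 2 - d ^ 2) ^ 2 * ‖x - b‖ ^ 2 := by
    rw [norm_smul, Real.norm_eq_abs, abs_of_pos hs]; ring
  have hR : ‖(D ^ 2) • (x - a) - (d ^ 2) • (x - c)‖ ^ 2
      = D ^ 4 * ‖x - a‖ ^ 2 - 2 * (D ^ 2 * d ^ 2) * ⟪x - a, x - c⟫ + d ^ 4 * ‖x - c‖ ^ 2 := by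
    rw [norm_sub_sq_real, norm_smul, norm_smul, real_inner_smul_left, real_inner_smul_right,
      Real.norm_eq_abs, Real.norm_eq_abs, abs_of_pos (pow_pos hD 2), abs_of_pos (pow_pos hd 2)]
    ring
  have hac : ‖a - c‖ ^ 2 = ‖x - a‖ ^ 2 - 2 * ⟪x - a, x - c⟫ + ‖x - c‖ ^ 2 := by
    have h' : a - c = (x - c) - (x - a) := by abel
    rw [h', norm_sub_sq_real, real_inner_comm]; ring
  have hxb2 : (D ^ 2 - d ^ 2) ^ 2 * ‖x - b‖ ^ 2 = (d * D * ‖a - c‖) ^ 2 := by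
    rw [hx]; field_simp
  have hcomb : (d * D * ‖a - c‖) ^ 2
      = D ^ 4 * ‖x - a‖ ^ 2 - 2 * (D ^ 2 * d ^ 2) * ⟪x - a, x - c⟫ + d ^ 4 * ‖x - c‖ ^ 2 := by
    rw [← hxb2, hL.symm, h2, hR]
  have hz : (D ^ 2 - d ^ 2) * (D ^ 2 * ‖x - a‖ ^ 2 - d ^ 2 * ‖x - c‖ ^ 2) = 0 := by
    linear_combination (d * D) ^ 2 * hac - hcomb
  have hmain : D ^ 2 * ‖x - a‖ ^ 2 = d ^ 2 * ‖x - c‖ ^ 2 := by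
    rcases mul_eq_zero.mp hz with h | h
    · exact absurd h hsne
    · linarith
  have h1 : (‖x - a‖ * D) ^ 2 = (‖x - c‖ * d) ^ 2 := by linear_combination hmain
  have hp : 0 ≤ ‖x - a‖ * D := mul_nonneg (norm_nonneg _) hD.le
  have hq : 0 ≤ ‖x - c‖ * d := mul_nonneg (norm_nonneg _) hd.le
  nlinarith [sq_nonneg (‖x - a‖ * D - ‖x - c‖ * d), sq_nonneg (‖x - a‖ * D + ‖x - c‖ * d)]

set_option maxHeartbeats 1600000 in
/-- Theorem 3 of the paper: case of internally disjoint Apollonius circles.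
If `E(1) > 0`, there exists `k ∈ (1, d₂/d₁)` with `E(k) = 0`, i.e. the circles
become internally tangent, giving a solution point `x`. -/
theorem exists_k_E_zero
    (z₁ z₂ z₃ : EuclideanSpace ℝ (Fin 2)) (d₁ d₂ d₃ : ℝ)
    (htri : AffineIndependent ℝ ![z₁, z₂, z₃])
    (hd₁ : 0 < d₁) (h12 : d₁ < d₂) (h23 : d₂ < d₃)
    (E : ℝ → ℝ)
    (hE : ∀ k : ℝ,
      E k = (d₂ * d₃ * ‖z₂ - z₃‖ / (d₃ ^ 2 - d₂ ^ 2)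
              - k * d₁ * d₃ * ‖z₁ - z₃‖ / (d₃ ^ 2 - k ^ 2 * d₁ ^ 2))
          - ‖((d₃ ^ 2 / (d₃ ^ 2 - d₂ ^ 2)) • z₂ + (d₂ ^ 2 / (d₂ ^ 2 - d₃ ^ 2)) • z₃)
              - ((d₃ ^ 2 / (d₃ ^ 2 - k ^ 2 * d₁ ^ 2)) • z₁
                  + (k ^ 2 * d₁ ^ 2 / (k ^ 2 * d₁ ^ 2 - d₃ ^ 2)) • z₃)‖)
    (hE1 : 0 < E 1) :
    ∃ k : ℝ, 1 < k ∧ k < d₂ / d₁ ∧ E k = 0 ∧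
      ∃ x : EuclideanSpace ℝ (Fin 2),
        ‖x - z₂‖ * d₃ = ‖x - z₃‖ * d₂ ∧
        ‖x - z₁‖ * d₃ = ‖x - z₃‖ * (k * d₁) := by
  have hd₂ : 0 < d₂ := hd₁.trans h12
  have hd₃ : 0 < d₃ := hd₂.trans h23
  have hinj := htri.injective
  have hne12 : z₁ ≠ z₂ := by
    intro h
    exact absurd (hinj (show ![z₁,z₂,z₃] 0 = ![z₁,z₂,z₃] 1 by simpa using h)) (by decide)
  have hne13 : z₁ ≠ z₃ := by
    intro h
    exact absurd (hinj (show ![z₁,z₂,z₃] 0 = ![z₁,z₂,z₃] 2 by simpa using h)) (by decide)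
  have hne23 : z₂ ≠ z₃ := by
    intro h
    exact absurd (hinj (show ![z₁,z₂,z₃] 1 = ![z₁,z₂,z₃] 2 by simpa using h)) (by decide)
  set k₀ := d₂ / d₁ with hk₀
  have hk₀1 : 1 < k₀ := (one_lt_div hd₁).mpr h12
  have hs23 : (0:ℝ) < d₃ ^ 2 - d₂ ^ 2 := by nlinarith
  -- continuity
  have hden : ∀ t ∈ Set.Icc (1:ℝ) k₀, d₃ ^ 2 - t ^ 2 * d₁ ^ 2 ≠ 0 := by
    rintro t ⟨ht1, ht2⟩
    have htd : t * d₁ ≤ d₂ := by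
      rw [hk₀] at ht2
      calc t * d₁ ≤ (d₂/d₁) * d₁ := by nlinarith
      _ = d₂ := by field_simp
    have h0 : (0:ℝ) ≤ t * d₁ := by nlinarith
    have h1 := mul_self_le_mul_self h0 htd
    nlinarith [h1]
  have hcontE : ContinuousOn E (Set.Icc 1 k₀) := by
    have hEfun : E = fun t : ℝ =>
        (d₂ * d₃ * ‖z₂ - z₃‖ / (d₃ ^ 2 - d₂ ^ 2)
                - t * d₁ * d₃ * ‖z₁ - z₃‖ / (d₃ ^ 2 - t ^ 2 * d₁ ^ 2))
            - ‖((d₃ ^ 2 / (d₃ ^ 2 - d₂ ^ 2)) • z₂ + (d₂ ^ 2 / (d₂ ^ 2 - d₃ ^ 2)) • z₃)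
                - ((d₃ ^ 2 / (d₃ ^ 2 - t ^ 2 * d₁ ^ 2)) • z₁
                    + (t ^ 2 * d₁ ^ 2 / (t ^ 2 * d₁ ^ 2 - d₃ ^ 2)) • z₃)‖ := funext hE
    rw [hEfun]
    have hden' : ∀ t ∈ Set.Icc (1:ℝ) k₀, t ^ 2 * d₁ ^ 2 - d₃ ^ 2 ≠ 0 := by
      intro t ht h
      exact hden t ht (by linarith)
    apply ContinuousOn.sub
    · apply ContinuousOn.sub continuousOn_const
      exact ContinuousOn.div (by fun_prop) (by fun_prop) hden
    · apply ContinuousOn.norm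
      apply ContinuousOn.sub continuousOn_const
      apply ContinuousOn.add
      · exact ContinuousOn.smul (ContinuousOn.div continuousOn_const (by fun_prop) hden)
          continuousOn_const
      · exact ContinuousOn.smul (ContinuousOn.div (by fun_prop) (by fun_prop) hden')
          continuousOn_const
  -- E(k₀) < 0
  have hEk0neg : E k₀ < 0 := by
    have hk0sq : k₀ ^ 2 * d₁ ^ 2 = d₂ ^ 2 := by
      rw [hk₀]; field_simp
    have hk0d : k₀ * d₁ = d₂ := by rw [hk₀]; field_simp
    have hEk0 := hE k₀
    rw [hk0sq, hk0d] at hEk0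
    have hv : ((d₃ ^ 2 / (d₃ ^ 2 - d₂ ^ 2)) • z₂ + (d₂ ^ 2 / (d₂ ^ 2 - d₃ ^ 2)) • z₃)
        - ((d₃ ^ 2 / (d₃ ^ 2 - d₂ ^ 2)) • z₁ + (d₂ ^ 2 / (d₂ ^ 2 - d₃ ^ 2)) • z₃)
        = (d₃ ^ 2 / (d₃ ^ 2 - d₂ ^ 2)) • (z₂ - z₁) := by module
    rw [hv, norm_smul, Real.norm_eq_abs,
      abs_of_pos (div_pos (pow_pos hd₃ 2) hs23)] at hEk0
    have htri' : ‖z₂ - z₃‖ - ‖z₁ - z₃‖ ≤ ‖z₂ - z₁‖ := by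
      have h := norm_sub_norm_le (z₂ - z₃) (z₁ - z₃)
      have h2 : (z₂ - z₃) - (z₁ - z₃) = z₂ - z₁ := by abel
      rwa [h2] at h
    have hnz : 0 < ‖z₂ - z₁‖ := by
      rw [norm_pos_iff, sub_ne_zero]
      exact fun h => hne12 h.symm
    rw [hEk0]
    have hnum : d₂ * d₃ * ‖z₂ - z₃‖ - d₂ * d₃ * ‖z₁ - z₃‖ - d₃ ^ 2 * ‖z₂ - z₁‖ < 0 := by
      have h1 := mul_le_mul_of_nonneg_left htri' (mul_pos hd₂ hd₃).le
      have h2 : d₂ * d₃ < d₃ ^ 2 := by nlinarith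
      have h3 := mul_lt_mul_of_pos_right h2 hnz
      nlinarith [h1, h3]
    have : d₂ * d₃ * ‖z₂ - z₃‖ / (d₃ ^ 2 - d₂ ^ 2) - d₂ * d₃ * ‖z₁ - z₃‖ / (d₃ ^ 2 - d₂ ^ 2)
        - d₃ ^ 2 / (d₃ ^ 2 - d₂ ^ 2) * ‖z₂ - z₁‖
        = (d₂ * d₃ * ‖z₂ - z₃‖ - d₂ * d₃ * ‖z₁ - z₃‖ - d₃ ^ 2 * ‖z₂ - z₁‖)
            / (d₃ ^ 2 - d₂ ^ 2) := by
      field_simp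
    rw [this]
    exact div_neg_of_neg_of_pos hnum hs23
  -- IVT
  have hmem : (0:ℝ) ∈ Set.Ioo (E k₀) (E 1) := ⟨hEk0neg, hE1⟩
  obtain ⟨k, hkIoo, hEk⟩ := intermediate_value_Ioo' (le_of_lt hk₀1) hcontE hmem
  obtain ⟨hk1, hk2⟩ := hkIoo
  refine ⟨k, hk1, hk2, hEk, ?_⟩
  -- construct the tangency point
  have hkd : 0 < k * d₁ := by nlinarith
  have hkdlt : k * d₁ < d₂ := by
    have : k * d₁ < (d₂/d₁) * d₁ := by nlinarith
    rwa [div_mul_cancel₀ _ (ne_of_gt hd₁)] at this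
  have hkdD : k * d₁ < d₃ := hkdlt.trans h23
  have hsk : (0:ℝ) < d₃ ^ 2 - k ^ 2 * d₁ ^ 2 := by nlinarith [mul_self_le_mul_self hkd.le hkdlt.le]
  set b2 : EuclideanSpace ℝ (Fin 2) :=
    (d₃ ^ 2 / (d₃ ^ 2 - d₂ ^ 2)) • z₂ + (d₂ ^ 2 / (d₂ ^ 2 - d₃ ^ 2)) • z₃ with hb2
  set b1 : EuclideanSpace ℝ (Fin 2) :=
    (d₃ ^ 2 / (d₃ ^ 2 - k ^ 2 * d₁ ^ 2)) • z₁
      + (k ^ 2 * d₁ ^ 2 / (k ^ 2 * d₁ ^ 2 - d₃ ^ 2)) • z₃ with hb1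
  set r2 : ℝ := d₂ * d₃ * ‖z₂ - z₃‖ / (d₃ ^ 2 - d₂ ^ 2) with hr2def
  set r1 : ℝ := k * d₁ * d₃ * ‖z₁ - z₃‖ / (d₃ ^ 2 - k ^ 2 * d₁ ^ 2) with hr1def
  have hr2pos : 0 < r2 := by
    apply div_pos _ hs23
    have : 0 < ‖z₂ - z₃‖ := by rw [norm_pos_iff, sub_ne_zero]; exact hne23
    positivity
  have hr1pos : 0 < r1 := by
    apply div_pos _ hsk
    have : 0 < ‖z₁ - z₃‖ := by rw [norm_pos_iff, sub_ne_zero]; exact hne13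
    positivity
  have hEk' : ‖b2 - b1‖ = r2 - r1 := by
    have := hE k
    rw [hEk] at this
    rw [hb1, hr1def]
    linarith [this]
  have hgoal : ∀ x : EuclideanSpace ℝ (Fin 2), ‖x - b2‖ = r2 → ‖x - b1‖ = r1 →
      ‖x - z₂‖ * d₃ = ‖x - z₃‖ * d₂ ∧ ‖x - z₁‖ * d₃ = ‖x - z₃‖ * (k * d₁) := by
    intro x hx2 hx1
    constructor
    · exact apollonius_circle_mem z₂ z₃ x d₂ d₃ hd₂ h23 (by rw [← hb2, hx2, hr2def])
    · refine apollonius_circle_mem z₁ z₃ x (k * d₁) d₃ hkd hkdD ?_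
      have hsq : (k * d₁) ^ 2 = k ^ 2 * d₁ ^ 2 := by ring
      rw [hsq, ← hb1, hx1, hr1def]
  by_cases hbb : b1 = b2
  · -- concentric: r1 = r2, take any point on the common circle
    have hr12 : r2 = r1 := by
      have : ‖b2 - b1‖ = 0 := by rw [hbb, sub_self, norm_zero]
      linarith [hEk' ▸ this]
    refine ⟨b2 + r2 • EuclideanSpace.single (0 : Fin 2) (1:ℝ), ?_⟩
    have hx2 : ‖(b2 + r2 • EuclideanSpace.single (0 : Fin 2) (1:ℝ)) - b2‖ = r2 := by
      rw [add_sub_cancel_left, norm_smul, EuclideanSpace.norm_single,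
        Real.norm_eq_abs, Real.norm_eq_abs, abs_of_pos hr2pos, abs_one, mul_one]
    have hx1 : ‖(b2 + r2 • EuclideanSpace.single (0 : Fin 2) (1:ℝ)) - b1‖ = r1 := by
      rw [hbb, hx2, hr12]
    exact hgoal _ hx2 hx1
  · -- internally tangent: tangency point
    set n : ℝ := ‖b1 - b2‖ with hn
    have hnpos : 0 < n := by
      rw [hn, norm_pos_iff, sub_ne_zero]; exact hbb
    have hnr : n = r2 - r1 := by rw [hn, norm_sub_rev]; exact hEk'
    refine ⟨b2 + (r2 / n) • (b1 - b2), ?_⟩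
    have hx2 : ‖(b2 + (r2 / n) • (b1 - b2)) - b2‖ = r2 := by
      rw [add_sub_cancel_left, norm_smul, Real.norm_eq_abs,
        abs_of_pos (div_pos hr2pos hnpos), ← hn, div_mul_cancel₀ _ (ne_of_gt hnpos)]
    have hx1 : ‖(b2 + (r2 / n) • (b1 - b2)) - b1‖ = r1 := by
      have hnne : (n:ℝ) ≠ 0 := ne_of_gt hnpos
      have hv : (b2 + (r2 / n) • (b1 - b2)) - b1 = ((r2 - n) / n) • (b1 - b2) := by
        have h' : ((r2 - n) / n) • (b1 - b2) = (r2 / n) • (b1 - b2) - (b1 - b2) := by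
          rw [sub_div, div_self hnne, sub_smul, one_smul]
        rw [h']
        abel
      rw [hv, norm_smul, Real.norm_eq_abs, ← hn]
      have : r2 - n = r1 := by rw [hnr]; ring
      rw [this, abs_of_pos (div_pos hr1pos hnpos), div_mul_cancel₀ _ (ne_of_gt hnpos)]
    exact hgoal _ hx2 hx1
end

section
/- The function E(k) = (r_23 − r_13(k)) − ‖b_23 − b_13(k)‖ is strictly decreasing in k on [1, d_2/d_1), under the hypotheses that z_1, z_2, z_3 form a nondegenerate triangle, 0 < d_1 < d_2 < d_3, and E(1) > 0. -/
set_option maxHeartbeats 1600000 in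
/-- The function `E(k) = (r₂₃ − r₁₃(k)) − ‖b₂₃ − b₁₃(k)‖` is strictly decreasing
on `[1, d₂/d₁)` for a nondegenerate triangle with `0 < d₁ < d₂ < d₃` and `E(1) > 0`. -/
theorem E_strictAntiOn
    (z₁ z₂ z₃ : EuclideanSpace ℝ (Fin 2)) (d₁ d₂ d₃ : ℝ)
    (htri : AffineIndependent ℝ ![z₁, z₂, z₃])
    (hd₁ : 0 < d₁) (h12 : d₁ < d₂) (h23 : d₂ < d₃)
    (E : ℝ → ℝ)
    (hE : ∀ k : ℝ,
      E k = (d₂ * d₃ * ‖z₂ - z₃‖ / (d₃ ^ 2 - d₂ ^ 2)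
              - k * d₁ * d₃ * ‖z₁ - z₃‖ / (d₃ ^ 2 - k ^ 2 * d₁ ^ 2))
          - ‖((d₃ ^ 2 / (d₃ ^ 2 - d₂ ^ 2)) • z₂ + (d₂ ^ 2 / (d₂ ^ 2 - d₃ ^ 2)) • z₃)
              - ((d₃ ^ 2 / (d₃ ^ 2 - k ^ 2 * d₁ ^ 2)) • z₁
                  + (k ^ 2 * d₁ ^ 2 / (k ^ 2 * d₁ ^ 2 - d₃ ^ 2)) • z₃)‖)
    (hE1 : 0 < E 1) :
    StrictAntiOn E (Set.Ico 1 (d₂ / d₁)) := by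
  intro k hk k' hk' hkk'
  obtain ⟨hk1, hk2⟩ := hk
  obtain ⟨hk1', hk2'⟩ := hk'
  have hd3 : 0 < d₃ := by linarith
  have hne : z₁ ≠ z₃ := by
    intro h
    have h02 : (0 : Fin 3) = 2 :=
      htri.injective (show ![z₁, z₂, z₃] 0 = ![z₁, z₂, z₃] 2 by simp [h])
    exact absurd h02 (by decide)
  have hu : 0 < ‖z₁ - z₃‖ := norm_pos_iff.mpr (sub_ne_zero.mpr hne)
  have hkd : k * d₁ < d₂ := (lt_div_iff₀ hd₁).mp hk2
  have hkd' : k' * d₁ < d₂ := (lt_div_iff₀ hd₁).mp hk2'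
  have hk0 : (0:ℝ) < k := by linarith
  have hk0' : (0:ℝ) < k' := by linarith
  have hA : 0 < d₃ ^ 2 - k ^ 2 * d₁ ^ 2 := by
    nlinarith [mul_pos (show (0:ℝ) < d₃ - k * d₁ by linarith)
      (show (0:ℝ) < d₃ + k * d₁ by nlinarith [mul_pos hk0 hd₁])]
  have hA' : 0 < d₃ ^ 2 - k' ^ 2 * d₁ ^ 2 := by
    nlinarith [mul_pos (show (0:ℝ) < d₃ - k' * d₁ by linarith)
      (show (0:ℝ) < d₃ + k' * d₁ by nlinarith [mul_pos hk0' hd₁])]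
  -- the key scalar inequality: radius increment exceeds center displacement
  have key : d₃ ^ 2 / (d₃ ^ 2 - k' ^ 2 * d₁ ^ 2) - d₃ ^ 2 / (d₃ ^ 2 - k ^ 2 * d₁ ^ 2)
      < k' * d₁ * d₃ / (d₃ ^ 2 - k' ^ 2 * d₁ ^ 2)
        - k * d₁ * d₃ / (d₃ ^ 2 - k ^ 2 * d₁ ^ 2) := by
    have h2 : (0:ℝ) < d₃ - k * d₁ := by linarith
    have h3 : (0:ℝ) < d₃ - k' * d₁ := by linarith
    have hprod : (0:ℝ) < d₁ * d₃ * (k' - k) * (d₃ - k * d₁) * (d₃ - k' * d₁) :=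
      mul_pos (mul_pos (mul_pos (mul_pos hd₁ hd3) (sub_pos.mpr hkk')) h2) h3
    rw [div_sub_div _ _ hA'.ne' hA.ne', div_sub_div _ _ hA'.ne' hA.ne',
      div_lt_div_iff₀ (mul_pos hA' hA) (mul_pos hA' hA)]
    nlinarith [mul_pos (mul_pos hA' hA) hprod]
  -- coefficient identity
  have hcoef : ∀ j : ℝ, 0 < d₃ ^ 2 - j ^ 2 * d₁ ^ 2 →
      j ^ 2 * d₁ ^ 2 / (j ^ 2 * d₁ ^ 2 - d₃ ^ 2)
        = 1 - d₃ ^ 2 / (d₃ ^ 2 - j ^ 2 * d₁ ^ 2) := by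
    intro j hj
    have h1 : j ^ 2 * d₁ ^ 2 - d₃ ^ 2 ≠ 0 := ne_of_lt (by linarith)
    have h2 : d₃ ^ 2 - j ^ 2 * d₁ ^ 2 ≠ 0 := hj.ne'
    field_simp
    ring
  -- vector identity for the difference of the two centers b₁₃
  have hvec : ((d₃ ^ 2 / (d₃ ^ 2 - k' ^ 2 * d₁ ^ 2)) • z₁
        + (k' ^ 2 * d₁ ^ 2 / (k' ^ 2 * d₁ ^ 2 - d₃ ^ 2)) • z₃)
      - ((d₃ ^ 2 / (d₃ ^ 2 - k ^ 2 * d₁ ^ 2)) • z₁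
        + (k ^ 2 * d₁ ^ 2 / (k ^ 2 * d₁ ^ 2 - d₃ ^ 2)) • z₃)
      = (d₃ ^ 2 / (d₃ ^ 2 - k' ^ 2 * d₁ ^ 2) - d₃ ^ 2 / (d₃ ^ 2 - k ^ 2 * d₁ ^ 2))
          • (z₁ - z₃) := by
    rw [hcoef k hA, hcoef k' hA']
    simp only [sub_smul, one_smul, smul_sub]
    abel
  -- the scalar coefficient is nonnegative
  have hs : 0 ≤ d₃ ^ 2 / (d₃ ^ 2 - k' ^ 2 * d₁ ^ 2) - d₃ ^ 2 / (d₃ ^ 2 - k ^ 2 * d₁ ^ 2) := by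
    rw [sub_nonneg, div_le_div_iff₀ hA hA']
    nlinarith [mul_nonneg (mul_nonneg (sq_nonneg d₃) (sq_nonneg d₁))
      (show (0:ℝ) ≤ k' ^ 2 - k ^ 2 by nlinarith)]
  -- the norm estimate
  have hnorm := norm_sub_norm_le
    ((((d₃ ^ 2 / (d₃ ^ 2 - d₂ ^ 2)) • z₂ + (d₂ ^ 2 / (d₂ ^ 2 - d₃ ^ 2)) • z₃)
        - ((d₃ ^ 2 / (d₃ ^ 2 - k ^ 2 * d₁ ^ 2)) • z₁
          + (k ^ 2 * d₁ ^ 2 / (k ^ 2 * d₁ ^ 2 - d₃ ^ 2)) • z₃)))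
    ((((d₃ ^ 2 / (d₃ ^ 2 - d₂ ^ 2)) • z₂ + (d₂ ^ 2 / (d₂ ^ 2 - d₃ ^ 2)) • z₃)
        - ((d₃ ^ 2 / (d₃ ^ 2 - k' ^ 2 * d₁ ^ 2)) • z₁
          + (k' ^ 2 * d₁ ^ 2 / (k' ^ 2 * d₁ ^ 2 - d₃ ^ 2)) • z₃)))
  rw [show ∀ B Q Q' : EuclideanSpace ℝ (Fin 2), (B - Q) - (B - Q') = Q' - Q from
    fun B Q Q' => by abel] at hnorm
  rw [hvec, norm_smul, Real.norm_eq_abs, abs_of_nonneg hs, sub_mul] at hnorm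
  -- finish
  have key2 := mul_lt_mul_of_pos_right key hu
  rw [sub_mul, sub_mul] at key2
  have hrk : k * d₁ * d₃ * ‖z₁ - z₃‖ / (d₃ ^ 2 - k ^ 2 * d₁ ^ 2)
      = k * d₁ * d₃ / (d₃ ^ 2 - k ^ 2 * d₁ ^ 2) * ‖z₁ - z₃‖ := by ring
  have hrk' : k' * d₁ * d₃ * ‖z₁ - z₃‖ / (d₃ ^ 2 - k' ^ 2 * d₁ ^ 2)
      = k' * d₁ * d₃ / (d₃ ^ 2 - k' ^ 2 * d₁ ^ 2) * ‖z₁ - z₃‖ := by ring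
  rw [hE k, hE k']
  linarith [hnorm, key2]
end

section
/- If x is a solution to the localization problem with equal multiplicative noise, i.e., there exist ε > −1 and x ∈ ℝ² with d_j⁰ = ‖x − z_j‖(1 + ε) for j = 1, 2, 3, where d_3⁰ ≥ d_2⁰ ≥ d_1⁰ > 0, then with d_j = d_j⁰/(1+ε) exactly one of the following holds: (a) d_1 = d_2 = d_3 and z_1, z_2, z_3 are not collinear; (b) d_3 = d_2 > d_1 and |z_23 · (b_13 − (z_2+z_3)/2)|/‖z_23‖ ≤ r_13; (c) d_3 > d_2 ≥ d_1 and |r_23 − r_13| ≤ ‖b_23 − b_13‖ ≤ r_23 + r_13. -/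
open scoped RealInnerProductSpace

private lemma sq_comb (u v : EuclideanSpace ℝ (Fin 2)) (a b : ℝ) :
    ‖a • u - b • v‖^2 = a^2*‖u‖^2 - 2*(a*b)*⟪u,v⟫ + b^2*‖v‖^2 := by
  rw [@norm_sub_sq_real, real_inner_smul_left, real_inner_smul_right, norm_smul, norm_smul]
  simp [mul_pow, sq_abs]
  ring

private lemma sq_sub_smul (w v : EuclideanSpace ℝ (Fin 2)) (a : ℝ) :
    ‖w - a • v‖^2 = ‖w‖^2 - 2*a*⟪w,v⟫ + a^2*‖v‖^2 := by
  rw [@norm_sub_sq_real, real_inner_smul_right, norm_smul]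
  simp [mul_pow, sq_abs]
  ring

private lemma apollo_dist (zi zj x : EuclideanSpace ℝ (Fin 2)) (di dj : ℝ)
    (hdi : di = ‖x - zi‖) (hdj : dj = ‖x - zj‖) (hpos : 0 < di) (hlt : di < dj) :
    ‖x - ((dj^2/(dj^2-di^2)) • zi + (di^2/(di^2-dj^2)) • zj)‖
      = di * dj * ‖zi - zj‖ / (dj^2 - di^2) := by
  have hdj0 : 0 < dj := lt_trans hpos hlt
  have hc : (0:ℝ) < dj^2 - di^2 := by nlinarith
  have hc' : dj^2 - di^2 ≠ 0 := ne_of_gt hc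
  have hc2 : di^2 - dj^2 ≠ 0 := sub_ne_zero.mpr (by nlinarith)
  have key : (dj^2 - di^2) • (x - ((dj^2/(dj^2-di^2)) • zi + (di^2/(di^2-dj^2)) • zj))
      = dj^2 • (x - zi) - di^2 • (x - zj) := by
    match_scalars <;> field_simp <;> ring
  have h2 : ‖zi - zj‖^2 = dj^2 - 2*⟪x - zi, x - zj⟫ + di^2 := by
    have h : zi - zj = (x - zj) - (x - zi) := by abel
    rw [h, @norm_sub_sq_real, real_inner_comm, ← hdi, ← hdj]
  have hsq : ‖dj^2 • (x - zi) - di^2 • (x - zj)‖^2 = (di*dj*‖zi - zj‖)^2 := by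
    have h1 := sq_comb (x - zi) (x - zj) (dj^2) (di^2)
    rw [← hdi, ← hdj] at h1
    rw [h1]; linear_combination (-(di^2*dj^2)) * h2
  have ha : (0:ℝ) ≤ ‖dj^2 • (x - zi) - di^2 • (x - zj)‖ := norm_nonneg _
  have hb : (0:ℝ) ≤ di*dj*‖zi - zj‖ := by positivity
  have hnorm : ‖dj^2 • (x - zi) - di^2 • (x - zj)‖ = di*dj*‖zi - zj‖ :=
    le_antisymm (by nlinarith) (by nlinarith)
  have hfin := congrArg norm key
  rw [norm_smul, Real.norm_eq_abs, abs_of_pos hc, hnorm] at hfin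
  rw [eq_div_iff hc']
  linear_combination hfin

/-- Corollary 1 of the paper: if the localization problem with equal
multiplicative noise has a solution, then exactly one of three geometric
conditions holds for the denoised distances `d_j = d_j⁰/(1+ε)`. -/
theorem corollary_exact_noise
    (z₁ z₂ z₃ : EuclideanSpace ℝ (Fin 2))
    (h12 : z₁ ≠ z₂) (h13 : z₁ ≠ z₃) (h23 : z₂ ≠ z₃)
    (d₁0 d₂0 d₃0 ε : ℝ) (hd₁0 : 0 < d₁0) (h120 : d₁0 ≤ d₂0) (h230 : d₂0 ≤ d₃0)
    (hε : -1 < ε)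
    (x : EuclideanSpace ℝ (Fin 2))
    (hx1 : d₁0 = ‖x - z₁‖ * (1 + ε))
    (hx2 : d₂0 = ‖x - z₂‖ * (1 + ε))
    (hx3 : d₃0 = ‖x - z₃‖ * (1 + ε))
    (d₁ d₂ d₃ : ℝ)
    (hd₁ : d₁ = d₁0 / (1 + ε)) (hd₂ : d₂ = d₂0 / (1 + ε)) (hd₃ : d₃ = d₃0 / (1 + ε)) :
    (d₁ = d₂ ∧ d₂ = d₃ ∧
      ¬ Collinear ℝ ({z₁, z₂, z₃} : Set (EuclideanSpace ℝ (Fin 2)))) ∨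
    (d₃ = d₂ ∧ d₁ < d₂ ∧
      |⟪z₂ - z₃, ((d₃ ^ 2 / (d₃ ^ 2 - d₁ ^ 2)) • z₁ + (d₁ ^ 2 / (d₁ ^ 2 - d₃ ^ 2)) • z₃)
          - (2 : ℝ)⁻¹ • (z₂ + z₃)⟫| / ‖z₂ - z₃‖
        ≤ d₁ * d₃ * ‖z₁ - z₃‖ / (d₃ ^ 2 - d₁ ^ 2)) ∨
    (d₂ < d₃ ∧ d₁ ≤ d₂ ∧
      |d₂ * d₃ * ‖z₂ - z₃‖ / (d₃ ^ 2 - d₂ ^ 2) - d₁ * d₃ * ‖z₁ - z₃‖ / (d₃ ^ 2 - d₁ ^ 2)|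
          ≤ ‖((d₃ ^ 2 / (d₃ ^ 2 - d₂ ^ 2)) • z₂ + (d₂ ^ 2 / (d₂ ^ 2 - d₃ ^ 2)) • z₃)
              - ((d₃ ^ 2 / (d₃ ^ 2 - d₁ ^ 2)) • z₁ + (d₁ ^ 2 / (d₁ ^ 2 - d₃ ^ 2)) • z₃)‖ ∧
        ‖((d₃ ^ 2 / (d₃ ^ 2 - d₂ ^ 2)) • z₂ + (d₂ ^ 2 / (d₂ ^ 2 - d₃ ^ 2)) • z₃)
            - ((d₃ ^ 2 / (d₃ ^ 2 - d₁ ^ 2)) • z₁ + (d₁ ^ 2 / (d₁ ^ 2 - d₃ ^ 2)) • z₃)‖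
          ≤ d₂ * d₃ * ‖z₂ - z₃‖ / (d₃ ^ 2 - d₂ ^ 2)
            + d₁ * d₃ * ‖z₁ - z₃‖ / (d₃ ^ 2 - d₁ ^ 2)) := by
  have hε' : (0:ℝ) < 1 + ε := by linarith
  have hεne : (1:ℝ) + ε ≠ 0 := ne_of_gt hε'
  have hd₁' : d₁ = ‖x - z₁‖ := by rw [hd₁, hx1, mul_div_assoc, div_self hεne, mul_one]
  have hd₂' : d₂ = ‖x - z₂‖ := by rw [hd₂, hx2, mul_div_assoc, div_self hεne, mul_one]
  have hd₃' : d₃ = ‖x - z₃‖ := by rw [hd₃, hx3, mul_div_assoc, div_self hεne, mul_one]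
  have hd1pos : 0 < d₁ := by rw [hd₁]; positivity
  have h12d : d₁ ≤ d₂ := by rw [hd₁, hd₂]; gcongr
  have h23d : d₂ ≤ d₃ := by rw [hd₂, hd₃]; gcongr
  have hd2pos : 0 < d₂ := lt_of_lt_of_le hd1pos h12d
  rcases eq_or_lt_of_le h23d with h3eq | h3lt
  · rcases eq_or_lt_of_le h12d with h2eq | h2lt
    · -- case (a)
      refine Or.inl ⟨h2eq, h3eq, ?_⟩
      intro hcol
      rw [collinear_iff_of_mem (show z₂ ∈ ({z₁, z₂, z₃} : Set _) by simp)] at hcol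
      obtain ⟨v, hv⟩ := hcol
      obtain ⟨a, ha⟩ := hv z₁ (by simp)
      obtain ⟨c, hcc⟩ := hv z₃ (by simp)
      have ha0 : a ≠ 0 := by
        intro h; apply h12; rw [ha, h]; simp
      have hc0 : c ≠ 0 := by
        intro h; apply h23; rw [hcc, h]; simp
      have hv0 : v ≠ 0 := by
        intro h; apply h12; rw [ha, h]; simp
      have hv2 : (0:ℝ) < ‖v‖^2 := by
        have := norm_pos_iff.mpr hv0; positivity
      have hn1 : ‖x - z₁‖ = ‖x - z₂‖ := by rw [← hd₁', ← hd₂']; exact h2eq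
      have hn3 : ‖x - z₃‖ = ‖x - z₂‖ := by
        rw [← hd₃', ← hd₂']; exact (h3eq).symm
      have hx1eq : x - z₁ = (x - z₂) - a • v := by rw [ha]; simp only [vadd_eq_add]; abel
      have hx3eq : x - z₃ = (x - z₂) - c • v := by rw [hcc]; simp only [vadd_eq_add]; abel
      have q1 : ‖x - z₂‖^2 - 2*a*⟪x - z₂, v⟫ + a^2*‖v‖^2 = ‖x - z₂‖^2 := by
        rw [← sq_sub_smul, ← hx1eq, hn1]
      have q3 : ‖x - z₂‖^2 - 2*c*⟪x - z₂, v⟫ + c^2*‖v‖^2 = ‖x - z₂‖^2 := by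
        rw [← sq_sub_smul, ← hx3eq, hn3]
      have e1 : a * (a*‖v‖^2 - 2*⟪x - z₂, v⟫) = 0 := by linear_combination q1
      have e3 : c * (c*‖v‖^2 - 2*⟪x - z₂, v⟫) = 0 := by linear_combination q3
      have f1 : a*‖v‖^2 = 2*⟪x - z₂, v⟫ := by
        have := (mul_eq_zero.mp e1).resolve_left ha0; linarith
      have f3 : c*‖v‖^2 = 2*⟪x - z₂, v⟫ := by
        have := (mul_eq_zero.mp e3).resolve_left hc0; linarith
      have hac : a = c := by
        have : a*‖v‖^2 = c*‖v‖^2 := by rw [f1, f3]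
        exact mul_right_cancel₀ (ne_of_gt hv2) this
      exact h13 (by rw [ha, hcc, hac])
    · -- case (b)
      have h13lt : d₁ < d₃ := lt_of_lt_of_le h2lt (le_of_eq h3eq)
      have hr := apollo_dist z₁ z₃ x d₁ d₃ hd₁' hd₃' hd1pos h13lt
      refine Or.inr (Or.inl ⟨h3eq.symm, h2lt, ?_⟩)
      have hz23 : (0:ℝ) < ‖z₂ - z₃‖ := by
        rw [norm_pos_iff]; exact sub_ne_zero.mpr h23
      have hn23 : ‖x - z₂‖ = ‖x - z₃‖ := by rw [← hd₂', ← hd₃']; exact h3eq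
      have horth : ⟪z₂ - z₃, x - (2:ℝ)⁻¹ • (z₂ + z₃)⟫ = 0 := by
        have key2 : ‖x - z₂‖^2 - ‖x - z₃‖^2
            = -2 * ⟪z₂ - z₃, x - (2:ℝ)⁻¹ • (z₂ + z₃)⟫ := by
          simp only [@norm_sub_sq_real, inner_sub_left, inner_sub_right, inner_add_left,
            inner_add_right, real_inner_smul_right, real_inner_self_eq_norm_sq]
          rw [real_inner_comm z₂ x, real_inner_comm z₃ x, real_inner_comm z₃ z₂]
          ring
        rw [hn23] at key2
        linarith [key2]
      set b13 := ((d₃ ^ 2 / (d₃ ^ 2 - d₁ ^ 2)) • z₁ + (d₁ ^ 2 / (d₁ ^ 2 - d₃ ^ 2)) • z₃) with hb13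
      have hsplit : ⟪z₂ - z₃, b13 - (2:ℝ)⁻¹ • (z₂ + z₃)⟫ = ⟪z₂ - z₃, b13 - x⟫ := by
        have h : b13 - (2:ℝ)⁻¹ • (z₂ + z₃) = (b13 - x) + (x - (2:ℝ)⁻¹ • (z₂ + z₃)) := by abel
        rw [h, inner_add_right, horth, add_zero]
      rw [div_le_iff₀ hz23, hsplit]
      calc |⟪z₂ - z₃, b13 - x⟫| ≤ ‖z₂ - z₃‖ * ‖b13 - x‖ := abs_real_inner_le_norm _ _
        _ = d₁ * d₃ * ‖z₁ - z₃‖ / (d₃ ^ 2 - d₁ ^ 2) * ‖z₂ - z₃‖ := by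
            rw [norm_sub_rev b13 x, hr]; ring
  · -- case (c)
    have h13lt : d₁ < d₃ := lt_of_le_of_lt h12d h3lt
    have hr13 := apollo_dist z₁ z₃ x d₁ d₃ hd₁' hd₃' hd1pos h13lt
    have hr23 := apollo_dist z₂ z₃ x d₂ d₃ hd₂' hd₃' hd2pos h3lt
    set b13 := ((d₃ ^ 2 / (d₃ ^ 2 - d₁ ^ 2)) • z₁ + (d₁ ^ 2 / (d₁ ^ 2 - d₃ ^ 2)) • z₃) with hb13
    set b23 := ((d₃ ^ 2 / (d₃ ^ 2 - d₂ ^ 2)) • z₂ + (d₂ ^ 2 / (d₂ ^ 2 - d₃ ^ 2)) • z₃) with hb23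
    refine Or.inr (Or.inr ⟨h3lt, h12d, ?_, ?_⟩)
    · rw [← hr13, ← hr23]
      calc |‖x - b23‖ - ‖x - b13‖| ≤ ‖(x - b23) - (x - b13)‖ := abs_norm_sub_norm_le _ _
        _ = ‖b23 - b13‖ := by rw [show (x - b23) - (x - b13) = -(b23 - b13) by abel, norm_neg]
    · rw [← hr13, ← hr23]
      calc ‖b23 - b13‖ = ‖(x - b13) - (x - b23)‖ := by rw [show (x - b13) - (x - b23) = b23 - b13 by abel]
        _ ≤ ‖x - b13‖ + ‖x - b23‖ := norm_sub_le _ _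
        _ = ‖x - b23‖ + ‖x - b13‖ := by ring
end
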